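/- Let T be a tubing of a finite connected simple graph Γ. For any tubing S of the iterated reconnected complement Γ_T^*, the substitution T •_Γ S is a tubing of Γ containing T. More generally, for any tube t ∈ T and any tubing S of (Γ_t)_{T|_t}^*, the t-substitution γ_t(T;S) is a tubing of Γ containing T. -/

import Mathlib

open scoped Classical
open TensorProduct

noncomputable section

/-- A finite simple graph whose vertices are a finite set of (totally ordered) naturals. -/
structure FinGraph : Type where
  verts : Finset ℕ
  Adj : ℕ → ℕ → Prop
  symm : ∀ v w, Adj v w → Adj w v
  loopless : ∀ v, ¬ Adj v v
  support : ∀ v w, Adj v w → v ∈ verts ∧ w ∈ verts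

namespace CDTub

/-- Connectivity of a vertex set within a graph: any two of its vertices are joined by a
walk staying inside the set. -/
def VConn (G : FinGraph) (s : Finset ℕ) : Prop :=
  ∀ v ∈ s, ∀ w ∈ s, Relation.ReflTransGen (fun a b => a ∈ s ∧ b ∈ s ∧ G.Adj a b) v w

/-- A tube: a nonempty set of vertices inducing a connected subgraph. -/
def IsTube (G : FinGraph) (t : Finset ℕ) : Prop :=
  t.Nonempty ∧ t ⊆ G.verts ∧ VConn G t

/-- A connected (nonempty) graph: the universal tube is a tube. -/
def IsConnGraph (G : FinGraph) : Prop := IsTube G G.verts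

/-- Two vertex sets are far apart: disjoint and with no edge between them. -/
def FarApart (G : FinGraph) (a b : Finset ℕ) : Prop :=
  Disjoint a b ∧ ¬ ∃ v ∈ a, ∃ w ∈ b, G.Adj v w

/-- Compatible tubes: nested or far apart. -/
def Compatible (G : FinGraph) (a b : Finset ℕ) : Prop :=
  a ⊆ b ∨ b ⊆ a ∨ FarApart G a b

/-- Linked tubes: disjoint and joined by an edge. -/
def Linked (G : FinGraph) (a b : Finset ℕ) : Prop :=
  Disjoint a b ∧ ∃ v ∈ a, ∃ w ∈ b, G.Adj v w

/-- A tubing of a connected graph: pairwise compatible tubes containing the universal tube. -/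
def IsTubing (G : FinGraph) (T : Finset (Finset ℕ)) : Prop :=
  G.verts ∈ T ∧ (∀ t ∈ T, IsTube G t) ∧
    ∀ t ∈ T, ∀ t' ∈ T, t ≠ t' → Compatible G t t'

/-- Induced subgraph on a set of vertices. -/
def induce (G : FinGraph) (t : Finset ℕ) : FinGraph where
  verts := t
  Adj v w := v ∈ t ∧ w ∈ t ∧ G.Adj v w
  symm := fun v w h => ⟨h.2.1, h.1, G.symm v w h.2.2⟩
  loopless := fun v h => G.loopless v h.2.2
  support := fun _ _ h => ⟨h.1, h.2.1⟩

/-- Simultaneous reconnected complement with respect to a family `F` of tubes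
(for a single tube, or a family of pairwise far apart tubes, this is the (iterated)
reconnected complement). -/
def reconnAll (G : FinGraph) (F : Finset (Finset ℕ)) : FinGraph where
  verts := G.verts \ F.biUnion id
  Adj v w := v ≠ w ∧ v ∈ G.verts \ F.biUnion id ∧ w ∈ G.verts \ F.biUnion id ∧
    (G.Adj v w ∨ ∃ f ∈ F, (∃ u ∈ f, G.Adj v u) ∧ ∃ u' ∈ f, G.Adj w u')
  symm := by
    rintro v w ⟨hne, hv, hw, h⟩
    refine ⟨hne.symm, hw, hv, ?_⟩
    rcases h with h | ⟨f, hf, h1, h2⟩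
    · exact Or.inl (G.symm _ _ h)
    · exact Or.inr ⟨f, hf, h2, h1⟩
  loopless := fun v h => h.1 rfl
  support := fun _ _ h => ⟨h.2.1, h.2.2.1⟩

/-- Reconnected complement `Γ_t^*` of a graph with respect to a tube. -/
def reconn (G : FinGraph) (t : Finset ℕ) : FinGraph := reconnAll G {t}

/-- The proper tubes of a tubing. -/
def properTubes (G : FinGraph) (T : Finset (Finset ℕ)) : Finset (Finset ℕ) :=
  T.filter (fun s => s ≠ G.verts)

/-- The maximal proper tubes of a tubing. -/
def MaxtP (G : FinGraph) (T : Finset (Finset ℕ)) : Finset (Finset ℕ) :=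
  (properTubes G T).filter (fun s => ∀ s' ∈ properTubes G T, s ⊆ s' → s = s')

/-- The iterated reconnected complement `Γ_T^*` with respect to the maximal proper tubes. -/
def gammaStar (G : FinGraph) (T : Finset (Finset ℕ)) : FinGraph :=
  reconnAll G (MaxtP G T)

/-- Restriction `T|_t` of a tubing to a tube. -/
def restrictT (T : Finset (Finset ℕ)) (t : Finset ℕ) : Finset (Finset ℕ) :=
  T.filter (fun s => s ⊆ t)

/-- For a tube `s` of `Γ_T^*`, the tube `s̃` of `Γ`: the union of `s` with all maximal
proper tubes of `T` linked to `s`. -/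
def tildeT (G : FinGraph) (T : Finset (Finset ℕ)) (s : Finset ℕ) : Finset ℕ :=
  s ∪ ((MaxtP G T).filter (fun m => Linked G m s)).biUnion id

/-- Substitution `T •_Γ S` of a tubing `S` of `Γ_T^*` into the tubing `T`. -/
def substT (G : FinGraph) (T S : Finset (Finset ℕ)) : Finset (Finset ℕ) :=
  T ∪ S.image (tildeT G T)

/-- The `t`-substitution `γ_t(T;S) = T ∪ (T|_t •_{Γ_t} S)`. -/
def gammaSub (G : FinGraph) (T : Finset (Finset ℕ)) (t : Finset ℕ)
    (S : Finset (Finset ℕ)) : Finset (Finset ℕ) :=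
  T ∪ substT (induce G t) (restrictT T t) S

/-- The tubing `T_t^*` induced on the reconnected complement `Γ_t^*`. -/
def indStar (T : Finset (Finset ℕ)) (t : Finset ℕ) : Finset (Finset ℕ) :=
  T.filter (fun s => Disjoint s t) ∪ (T.filter (fun s => t ⊂ s)).image (fun s => s \ t)

/-- The operation `T ◇ S` of Definition 2.4(2). -/
def diamond (G : FinGraph) (T : Finset (Finset ℕ)) (t : Finset ℕ)
    (S : Finset (Finset ℕ)) : Finset (Finset ℕ) :=
  T ∪ S.filter (fun s => ¬ Linked G s t) ∪
    (S.filter (fun s => Linked G s t)).image (fun s => s ∪ t)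

/-- The tubes of `T`, viewed as subsets of the subtype of vertices. -/
def tubeSets (G : FinGraph) (T : Finset (Finset ℕ)) : Set (Set {x // x ∈ G.verts}) :=
  {U | ∃ t ∈ T, U = {x : {x // x ∈ G.verts} | (x : ℕ) ∈ t}}

/-- The topology on the vertex set generated by the tubes of `T`. -/
def tubingTop (G : FinGraph) (T : Finset (Finset ℕ)) :
    TopologicalSpace {x // x ∈ G.verts} :=
  TopologicalSpace.generateFrom (tubeSets G T)

/-- One-line notation of the permutation `σ_t`: the vertices of `t` in increasing order
followed by the remaining vertices in increasing order. -/
def sigmaList (X t : Finset ℕ) : List ℕ :=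
  t.sort (· ≤ ·) ++ (X \ t).sort (· ≤ ·)

/-- Number of `Γ`-inversions of a permutation given by its one-line notation `l`:
pairs of positions `p < q` carrying values `a > b` which form an edge of `Γ`. -/
def invCount (G : FinGraph) (l : List ℕ) : ℕ :=
  ((Finset.range l.length ×ˢ Finset.range l.length).filter
    (fun pq => pq.1 < pq.2 ∧ l.getD pq.2 0 < l.getD pq.1 0 ∧
      G.Adj (l.getD pq.1 0) (l.getD pq.2 0))).card

/-- The signature `sgn^Γ(σ) = (-1)^{inv_Γ(σ)}`. -/
def graphSgn (G : FinGraph) (l : List ℕ) : ℤ := (-1) ^ invCount G l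

/-- Rank (1-based) of `v` inside a finite set `X` of naturals: the order-preserving
relabelling of `X` by `{1,…,|X|}`. -/
def rk (X : Finset ℕ) (v : ℕ) : ℕ := (X.filter (fun u => u ≤ v)).card

/-- Order-preserving relabelling of a graph by the initial segment `{1,…,n}`. -/
def relabelG (G : FinGraph) : FinGraph where
  verts := G.verts.image (rk G.verts)
  Adj i j := i ≠ j ∧ ∃ v w, G.Adj v w ∧ i = rk G.verts v ∧ j = rk G.verts w
  symm := by
    rintro i j ⟨hne, v, w, h, hi, hj⟩
    exact ⟨hne.symm, w, v, G.symm _ _ h, hj, hi⟩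
  loopless := fun _ h => h.1 rfl
  support := by
    rintro i j ⟨hne, v, w, h, hi, hj⟩
    exact ⟨Finset.mem_image.mpr ⟨v, (G.support _ _ h).1, hi.symm⟩,
      Finset.mem_image.mpr ⟨w, (G.support _ _ h).2, hj.symm⟩⟩

/-- Order-preserving relabelling of a subset of `X`. -/
def relabelF (X t : Finset ℕ) : Finset ℕ := t.image (rk X)

/-- Order-preserving relabelling of a family of subsets of `X`. -/
def relabelT (X : Finset ℕ) (T : Finset (Finset ℕ)) : Finset (Finset ℕ) :=
  T.image (relabelF X)

/-- Connected components (in `G`) of a set of vertices. -/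
def comps (G : FinGraph) (s : Finset ℕ) : Finset (Finset ℕ) :=
  s.image (fun v => s.filter (fun w =>
    Relation.ReflTransGen (fun a b => a ∈ s ∧ b ∈ s ∧ G.Adj a b) v w))

/-- The restriction map `res_Ω^Γ` on tubings: replace each tube by its connected
components in `Ω`. -/
def resT (Om : FinGraph) (T : Finset (Finset ℕ)) : Finset (Finset ℕ) :=
  T.biUnion (comps Om)

/-- Shift of a vertex set by `n`. -/
def shiftF (n : ℕ) (s : Finset ℕ) : Finset ℕ := s.image (fun v => v + n)

/-- Shift of a family of vertex sets by `n`. -/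
def shiftT (n : ℕ) (S : Finset (Finset ℕ)) : Finset (Finset ℕ) := S.image (shiftF n)

/-- Shift of a graph by `n`. -/
def shiftG (n : ℕ) (G : FinGraph) : FinGraph where
  verts := shiftF n G.verts
  Adj v w := ∃ a b, G.Adj a b ∧ v = a + n ∧ w = b + n
  symm := by
    rintro v w ⟨a, b, h, rfl, rfl⟩
    exact ⟨b, a, G.symm _ _ h, rfl, rfl⟩
  loopless := by
    rintro v ⟨a, b, h, ha, hb⟩
    have : a = b := by omega
    exact G.loopless b (this ▸ h)
  support := by
    rintro v w ⟨a, b, h, rfl, rfl⟩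
    exact ⟨Finset.mem_image.mpr ⟨a, (G.support _ _ h).1, rfl⟩,
      Finset.mem_image.mpr ⟨b, (G.support _ _ h).2, rfl⟩⟩

/-- `X_T` : the vertices belonging to no proper tube of `T`. -/
def freeVerts (G : FinGraph) (T : Finset (Finset ℕ)) : Finset ℕ :=
  G.verts.filter (fun v => ∀ s ∈ T, s ≠ G.verts → v ∉ s)

/-- The endpoint `max X_T` of the joining edge. -/
def joinA (G : FinGraph) (T : Finset (Finset ℕ)) : ℕ :=
  WithBot.unbotD 0 (freeVerts G T).max

/-- The endpoint `n + min X_S` of the joining edge. -/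
def joinB (Om : FinGraph) (S : Finset (Finset ℕ)) (n : ℕ) : ℕ :=
  n + WithTop.untopD 0 (freeVerts Om S).min

/-- Vertex set of the joined graph `Γ ∪_{T,S} Ω`. -/
def joinVerts (G Om : FinGraph) (n : ℕ) : Finset ℕ := G.verts ∪ shiftF n Om.verts

/-- The joined graph `Γ ∪_{T,S} Ω`: the disjoint union (with `Ω` shifted by `n`)
plus one edge from `max X_T` to `n + min X_S`. -/
def joinG (G Om : FinGraph) (T S : Finset (Finset ℕ)) (n : ℕ) : FinGraph where
  verts := joinVerts G Om n
  Adj v w := G.Adj v w ∨ (shiftG n Om).Adj v w ∨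
    (v ≠ w ∧ v ∈ joinVerts G Om n ∧ w ∈ joinVerts G Om n ∧
      ((v = joinA G T ∧ w = joinB Om S n) ∨ (w = joinA G T ∧ v = joinB Om S n)))
  symm := by
    rintro v w (h | h | ⟨hne, hv, hw, hc⟩)
    · exact Or.inl (G.symm _ _ h)
    · exact Or.inr (Or.inl ((shiftG n Om).symm _ _ h))
    · exact Or.inr (Or.inr ⟨hne.symm, hw, hv, hc.symm⟩)
  loopless := by
    rintro v (h | h | ⟨hne, _⟩)
    · exact G.loopless v h
    · exact (shiftG n Om).loopless v h
    · exact hne rfl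
  support := by
    rintro v w (h | h | ⟨_, hv, hw, _⟩)
    · exact ⟨Finset.mem_union_left _ (G.support _ _ h).1,
        Finset.mem_union_left _ (G.support _ _ h).2⟩
    · exact ⟨Finset.mem_union_right _ ((shiftG n Om).support _ _ h).1,
        Finset.mem_union_right _ ((shiftG n Om).support _ _ h).2⟩
    · exact ⟨hv, hw⟩

/-- `T ▷ S`. -/
def trR (G Om : FinGraph) (T S : Finset (Finset ℕ)) (n : ℕ) : Finset (Finset ℕ) :=
  T ∪ shiftT n (properTubes Om S) ∪ {joinVerts G Om n}

/-- `T ◁ S`. -/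
def trL (G Om : FinGraph) (T S : Finset (Finset ℕ)) (n : ℕ) : Finset (Finset ℕ) :=
  properTubes G T ∪ shiftT n S ∪ {joinVerts G Om n}

/-- `T ⊥ S`. -/
def tPerp (G Om : FinGraph) (T S : Finset (Finset ℕ)) (n : ℕ) : Finset (Finset ℕ) :=
  properTubes G T ∪ shiftT n (properTubes Om S) ∪ {joinVerts G Om n}

/-- Equality of graphs: same vertex set and same edges. -/
def GEq (A B : FinGraph) : Prop :=
  A.verts = B.verts ∧ ∀ v w, A.Adj v w ↔ B.Adj v w

/-- Index type for the basis of `Tub⁺`: `none` is the unit `1`, `some (Γ,T)` is a pair. -/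
abbrev TubIdx : Type := Option (FinGraph × Finset (Finset ℕ))

/-- A pair `(Γ,T)` relabelled order-preservingly to standard vertex set, identified
with the unit `1` when the vertex set is empty. -/
def embPair (G : FinGraph) (T : Finset (Finset ℕ)) : TubIdx :=
  if G.verts = ∅ then none else some (relabelG G, relabelT G.verts T)

/-- The value of the pre-Lie coproduct `Δ_•` on a basis element. -/
def deltaFun (K : Type) [CommRing K] (i : TubIdx) :
    (TubIdx →₀ K) ⊗[K] (TubIdx →₀ K) :=
  match i with
  | none => Finsupp.single (none : TubIdx) (1 : K) ⊗ₜ[K] Finsupp.single (none : TubIdx) (1 : K)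
  | some (G, T) =>
      (∑ t ∈ T, (Finsupp.single (embPair (induce G t) (restrictT T t)) (1 : K)) ⊗ₜ[K]
        (Finsupp.single (embPair (reconn G t) (indStar T t)) (1 : K)))
      + (Finsupp.single (none : TubIdx) (1 : K)) ⊗ₜ[K]
          (Finsupp.single (some (G, T) : TubIdx) (1 : K))

/-- The pre-Lie coproduct `Δ_•` on `Tub⁺`, the free module on `TubIdx`. -/
def delta (K : Type) [CommRing K] :
    (TubIdx →₀ K) →ₗ[K] (TubIdx →₀ K) ⊗[K] (TubIdx →₀ K) :=
  Finsupp.lift ((TubIdx →₀ K) ⊗[K] (TubIdx →₀ K)) K TubIdx (deltaFun K)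

end CDTub

/-!
The maximal proper tubes of a tubing are pairwise far apart, and a tube `s` of `Γ_T^*` is
disjoint from all of them. The tube `s̃` is connected because an edge of `Γ_T^*` inside `s`
is either an edge of `Γ` or a detour through a maximal tube linked to `s`, which lies in
`s̃`. A tube of `T` lies in some maximal tube `m`; it is inside `s̃` if `m` is linked to `s`
and far from `s̃` otherwise. Far apart tubes `s, s'` of `Γ_T^*` give far apart `s̃, s̃'`,
since a maximal tube linked to both would join `s` and `s'` by an edge of `Γ_T^*`.
For the `t`-substitution, the tubing of `Γ_t` obtained this way contains `T|_t`, and the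
tubes of `T` not inside `t` contain `t` or are far from it.
-/

namespace CDTub

open Relation

variable {G : FinGraph} {T : Finset (Finset ℕ)} {a b s s' t m m' : Finset ℕ}

abbrev ReachIn (G : FinGraph) (s : Finset ℕ) : ℕ → ℕ → Prop :=
  ReflTransGen fun a b => a ∈ s ∧ b ∈ s ∧ G.Adj a b

lemma ReachIn.mono (h : s ⊆ s') {v w : ℕ} (hvw : ReachIn G s v w) : ReachIn G s' v w :=
  ReflTransGen.mono (fun _ _ ⟨ha, hb, hab⟩ => ⟨h ha, h hb, hab⟩) _ _ hvw

lemma ReachIn.symm {v w : ℕ} (h : ReachIn G s v w) : ReachIn G s w v :=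
  ReflTransGen.mono (fun _ _ ⟨ha, hb, hab⟩ => ⟨hb, ha, G.symm _ _ hab⟩) _ _
    (reflTransGen_swap.mpr h)

lemma vConn_of_core (hcore : ∀ v ∈ s, ∀ w ∈ s, ReachIn G t v w)
    (hreach : ∀ v ∈ t, ∃ q ∈ s, ReachIn G t v q) : VConn G t := by
  intro v hv w hw
  obtain ⟨q, hq, hvq⟩ := hreach v hv
  obtain ⟨q', hq', hwq'⟩ := hreach w hw
  exact hvq.trans ((hcore q hq q' hq').trans hwq'.symm)

lemma farApart_iff : FarApart G a b ↔ ∀ v ∈ a, ∀ w ∈ b, v ≠ w ∧ ¬ G.Adj v w := by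
  simp only [FarApart, Finset.disjoint_left]
  grind

lemma FarApart.symm (h : FarApart G a b) : FarApart G b a :=
  farApart_iff.mpr fun v hv w hw =>
    ⟨fun hvw => (farApart_iff.mp h w hw v hv).1 hvw.symm,
      fun hvw => (farApart_iff.mp h w hw v hv).2 (G.symm _ _ hvw)⟩

lemma FarApart.mono_left (h : FarApart G a b) (ha : s ⊆ a) : FarApart G s b :=
  farApart_iff.mpr fun v hv => farApart_iff.mp h v (ha hv)

lemma Compatible.symm (h : Compatible G a b) : Compatible G b a := by
  rcases h with h | h | h
  exacts [Or.inr (Or.inl h), Or.inl h, Or.inr (Or.inr h.symm)]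

lemma vConn_induce (hs : s ⊆ t) : VConn (induce G t) s ↔ VConn G s := by
  have : (fun a b => a ∈ s ∧ b ∈ s ∧ (induce G t).Adj a b) =
      fun a b => a ∈ s ∧ b ∈ s ∧ G.Adj a b := by
    ext a b
    exact ⟨fun ⟨ha, hb, h⟩ => ⟨ha, hb, h.2.2⟩,
      fun ⟨ha, hb, h⟩ => ⟨ha, hb, hs ha, hs hb, h⟩⟩
  simp only [VConn, this]

lemma isTube_induce_iff (ht : t ⊆ G.verts) :
    IsTube (induce G t) s ↔ IsTube G s ∧ s ⊆ t := by
  constructor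
  · rintro ⟨hne, hst, hconn⟩
    exact ⟨⟨hne, hst.trans ht, (vConn_induce hst).mp hconn⟩, hst⟩
  · rintro ⟨⟨hne, -, hconn⟩, hst⟩
    exact ⟨hne, hst, (vConn_induce hst).mpr hconn⟩

lemma farApart_induce_iff (ha : a ⊆ t) (hb : b ⊆ t) :
    FarApart (induce G t) a b ↔ FarApart G a b := by
  simp only [farApart_iff, induce]
  grind

lemma compatible_induce_iff (ha : a ⊆ t) (hb : b ⊆ t) :
    Compatible (induce G t) a b ↔ Compatible G a b := by
  simp only [Compatible, farApart_induce_iff ha hb]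

lemma IsTubing.restrict (hT : IsTubing G T) (ht : t ∈ T) :
    IsTubing (induce G t) (restrictT T t) := by
  have ht' : t ⊆ G.verts := (hT.2.1 t ht).2.1
  refine ⟨Finset.mem_filter.mpr ⟨ht, subset_rfl⟩, fun s hs => ?_, fun s hs s' hs' hne => ?_⟩
  · obtain ⟨hsT, hst⟩ := Finset.mem_filter.mp hs
    exact (isTube_induce_iff ht').mpr ⟨hT.2.1 s hsT, hst⟩
  · obtain ⟨hsT, hst⟩ := Finset.mem_filter.mp hs
    obtain ⟨hs'T, hs't⟩ := Finset.mem_filter.mp hs'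
    exact (compatible_induce_iff hst hs't).mpr (hT.2.2 s hsT s' hs'T hne)

lemma isTubing_union {A B : Finset (Finset ℕ)} (hA : IsTubing G A) (hB : ∀ b ∈ B, IsTube G b)
    (hBB : ∀ b ∈ B, ∀ b' ∈ B, b ≠ b' → Compatible G b b')
    (hAB : ∀ a ∈ A, ∀ b ∈ B, a ≠ b → Compatible G a b) : IsTubing G (A ∪ B) := by
  refine ⟨Finset.mem_union_left _ hA.1, fun x hx => ?_, fun x hx y hy hne => ?_⟩
  · rcases Finset.mem_union.mp hx with h | h
    exacts [hA.2.1 x h, hB x h]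
  · rcases Finset.mem_union.mp hx with h | h <;> rcases Finset.mem_union.mp hy with h' | h'
    exacts [hA.2.2 x h y h' hne, hAB x h y h' hne, (hAB y h' x h hne.symm).symm,
      hBB x h y h' hne]

lemma IsTubing.union_of_induce {W : Finset (Finset ℕ)} (hT : IsTubing G T) (ht : t ∈ T)
    (hW : IsTubing (induce G t) W) (hTW : restrictT T t ⊆ W) : IsTubing G (T ∪ W) := by
  have ht' : t ⊆ G.verts := (hT.2.1 t ht).2.1
  have hW' : ∀ w ∈ W, IsTube G w ∧ w ⊆ t := fun w hw =>
    (isTube_induce_iff ht').mp (hW.2.1 w hw)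
  refine isTubing_union hT (fun w hw => (hW' w hw).1) (fun w hw w' hw' hne => ?_) ?_
  · exact (compatible_induce_iff (hW' w hw).2 (hW' w' hw').2).mp (hW.2.2 w hw w' hw' hne)
  intro u hu w hw hne
  have hwt := (hW' w hw).2
  by_cases hut : u = t
  · exact Or.inr (Or.inl (hut ▸ hwt))
  rcases hT.2.2 u hu t ht hut with hsub | hsub | hfar
  · have huW : u ∈ W := hTW (Finset.mem_filter.mpr ⟨hu, hsub⟩)
    exact (compatible_induce_iff hsub hwt).mp (hW.2.2 u huW w hw hne)
  · exact Or.inr (Or.inl (hwt.trans hsub))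
  · exact Or.inr (Or.inr (hfar.symm.mono_left hwt).symm)

lemma mem_maxtP_iff : m ∈ MaxtP G T ↔ Maximal (· ∈ properTubes G T) m := by
  simp only [MaxtP, Finset.mem_filter, Maximal]
  exact and_congr_right fun _ =>
    ⟨fun h s hs hms => (h s hs hms).ge, fun h s hs hms => subset_antisymm hms (h hs hms)⟩

lemma mem_of_mem_maxtP (hm : m ∈ MaxtP G T) : m ∈ T :=
  (Finset.mem_filter.mp (Finset.mem_filter.mp hm).1).1

lemma exists_maxtP_superset (ht : t ∈ T) (hne : t ≠ G.verts) :
    ∃ m ∈ MaxtP G T, t ⊆ m := by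
  obtain ⟨m, htm, hm⟩ :=
    Finset.exists_le_maximal (properTubes G T) (Finset.mem_filter.mpr ⟨ht, hne⟩)
  exact ⟨m, mem_maxtP_iff.mpr hm, htm⟩

lemma IsTubing.farApart_of_mem_maxtP (hT : IsTubing G T) (hm : m ∈ MaxtP G T)
    (hm' : m' ∈ MaxtP G T) (hne : m ≠ m') : FarApart G m m' := by
  have hmax := mem_maxtP_iff.mp hm
  have hmax' := mem_maxtP_iff.mp hm'
  rcases hT.2.2 m (mem_of_mem_maxtP hm) m' (mem_of_mem_maxtP hm') hne with h | h | h
  · exact absurd (subset_antisymm h (hmax.2 hmax'.1 h)) hne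
  · exact absurd (subset_antisymm (hmax'.2 hmax.1 h) h) hne
  · exact h

lemma gammaStar_verts_subset : (gammaStar G T).verts ⊆ G.verts :=
  Finset.sdiff_subset

lemma disjoint_of_subset_gammaStar (hs : s ⊆ (gammaStar G T).verts) (hm : m ∈ MaxtP G T) :
    Disjoint m s :=
  Finset.disjoint_right.mpr fun _ hv hvm =>
    (Finset.mem_sdiff.mp (hs hv)).2 (Finset.mem_biUnion.mpr ⟨m, hm, hvm⟩)

lemma mem_tildeT {v : ℕ} :
    v ∈ tildeT G T s ↔ v ∈ s ∨ ∃ m ∈ MaxtP G T, Linked G m s ∧ v ∈ m := by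
  simp only [tildeT, Finset.mem_union, Finset.mem_biUnion, Finset.mem_filter, id, and_assoc]

lemma subset_tildeT : s ⊆ tildeT G T s :=
  Finset.subset_union_left

lemma subset_tildeT_of_linked (hm : m ∈ MaxtP G T) (hl : Linked G m s) :
    m ⊆ tildeT G T s :=
  fun _ hv => mem_tildeT.mpr (Or.inr ⟨m, hm, hl, hv⟩)

lemma IsTubing.tildeT_subset_verts (hT : IsTubing G T) (hs : s ⊆ (gammaStar G T).verts) :
    tildeT G T s ⊆ G.verts := by
  intro v hv
  rcases mem_tildeT.mp hv with h | ⟨m, hm, -, hvm⟩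
  exacts [gammaStar_verts_subset (hs h), (hT.2.1 m (mem_of_mem_maxtP hm)).2.1 hvm]

lemma tildeT_mono (hss' : s ⊆ s') (hs' : s' ⊆ (gammaStar G T).verts) :
    tildeT G T s ⊆ tildeT G T s' := by
  intro v hv
  rcases mem_tildeT.mp hv with h | ⟨m, hm, ⟨-, u, hu, w, hw, huw⟩, hvm⟩
  · exact subset_tildeT (hss' h)
  · exact subset_tildeT_of_linked hm
      ⟨disjoint_of_subset_gammaStar hs' hm, u, hu, w, hss' hw, huw⟩ hvm

lemma IsTubing.reachIn_tildeT_of_linked (hT : IsTubing G T) (hm : m ∈ MaxtP G T)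
    (hl : Linked G m s) {v w : ℕ} (hv : v ∈ m) (hw : w ∈ m) : ReachIn G (tildeT G T s) v w :=
  ReachIn.mono (subset_tildeT_of_linked hm hl) ((hT.2.1 m (mem_of_mem_maxtP hm)).2.2 v hv w hw)

lemma IsTubing.isTube_tildeT (hT : IsTubing G T) (hs : IsTube (gammaStar G T) s) :
    IsTube G (tildeT G T s) := by
  obtain ⟨hne, hsv, hconn⟩ := hs
  refine ⟨hne.mono subset_tildeT, hT.tildeT_subset_verts hsv, vConn_of_core (s := s) ?_ ?_⟩
  · intro v hv w hw
    refine ReflTransGen.lift' id (fun a b ⟨ha, hb, hab⟩ => ?_) _ _ (hconn v hv w hw)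
    obtain ⟨-, -, -, hab | ⟨f, hf, ⟨u, hu, hau⟩, u', hu', hbu'⟩⟩ := hab
    · exact .single ⟨subset_tildeT ha, subset_tildeT hb, hab⟩
    have hl : Linked G f s :=
      ⟨disjoint_of_subset_gammaStar hsv hf, u, hu, a, ha, G.symm _ _ hau⟩
    have hf' := subset_tildeT_of_linked hf hl
    exact ((ReflTransGen.single ⟨subset_tildeT ha, hf' hu, hau⟩).trans
      (hT.reachIn_tildeT_of_linked hf hl hu hu')).tail
        ⟨hf' hu', subset_tildeT hb, G.symm _ _ hbu'⟩
  · intro v hv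
    rcases mem_tildeT.mp hv with h | ⟨m, hm, hl, hvm⟩
    · exact ⟨v, h, .refl⟩
    have ⟨_, u, hu, q, hq, huq⟩ := hl
    exact ⟨q, hq, (hT.reachIn_tildeT_of_linked hm hl hvm hu).tail
      ⟨subset_tildeT_of_linked hm hl hu, subset_tildeT hq, huq⟩⟩

lemma not_linked_of_farApart_gammaStar (hs : s ⊆ (gammaStar G T).verts)
    (hs' : s' ⊆ (gammaStar G T).verts) (hfar : FarApart (gammaStar G T) s s')
    (hm : m ∈ MaxtP G T) (hl : Linked G m s) : ¬ Linked G m s' := by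
  rintro ⟨-, u', hu', w, hw, hu'w⟩
  obtain ⟨-, u, hu, v, hv, huv⟩ := hl
  have hvw := farApart_iff.mp hfar v hv w hw
  exact hvw.2 ⟨hvw.1, hs hv, hs' hw,
    Or.inr ⟨m, hm, ⟨u, hu, G.symm _ _ huv⟩, u', hu', G.symm _ _ hu'w⟩⟩

lemma IsTubing.farApart_tildeT (hT : IsTubing G T) (hs : s ⊆ (gammaStar G T).verts)
    (hs' : s' ⊆ (gammaStar G T).verts) (hfar : FarApart (gammaStar G T) s s') :
    FarApart G (tildeT G T s) (tildeT G T s') := by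
  refine farApart_iff.mpr fun v hv w hw => ?_
  rcases mem_tildeT.mp hv with hv | ⟨m, hm, hl, hvm⟩ <;>
    rcases mem_tildeT.mp hw with hw | ⟨m', hm', hl', hwm'⟩
  · have hvw := farApart_iff.mp hfar v hv w hw
    exact ⟨hvw.1, fun h => hvw.2 ⟨hvw.1, hs hv, hs' hw, Or.inl h⟩⟩
  · have hdisj := disjoint_of_subset_gammaStar hs hm'
    refine ⟨(Finset.disjoint_iff_ne.mp hdisj w hwm' v hv).symm, fun h => ?_⟩
    exact not_linked_of_farApart_gammaStar hs hs' hfar hm'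
      ⟨hdisj, w, hwm', v, hv, G.symm _ _ h⟩ hl'
  · have hdisj := disjoint_of_subset_gammaStar hs' hm
    refine ⟨Finset.disjoint_iff_ne.mp hdisj v hvm w hw, fun h => ?_⟩
    exact not_linked_of_farApart_gammaStar hs hs' hfar hm hl ⟨hdisj, v, hvm, w, hw, h⟩
  · obtain rfl | hne := eq_or_ne m m'
    · exact (not_linked_of_farApart_gammaStar hs hs' hfar hm hl hl').elim
    · exact farApart_iff.mp (hT.farApart_of_mem_maxtP hm hm' hne) v hvm w hwm'

lemma IsTubing.farApart_tildeT_of_not_linked (hT : IsTubing G T)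
    (hs : s ⊆ (gammaStar G T).verts) (hm : m ∈ MaxtP G T) (hl : ¬ Linked G m s) :
    FarApart G m (tildeT G T s) := by
  refine farApart_iff.mpr fun v hv w hw => ?_
  rcases mem_tildeT.mp hw with hw | ⟨m', hm', hl', hwm'⟩
  · have hdisj := disjoint_of_subset_gammaStar hs hm
    exact ⟨Finset.disjoint_iff_ne.mp hdisj v hv w hw, fun h => hl ⟨hdisj, v, hv, w, hw, h⟩⟩
  · exact farApart_iff.mp (hT.farApart_of_mem_maxtP hm hm' fun h => hl (h ▸ hl')) v hv w hwm'

lemma IsTubing.compatible_tildeT (hT : IsTubing G T) (ht : t ∈ T)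
    (hs : s ⊆ (gammaStar G T).verts) : Compatible G t (tildeT G T s) := by
  by_cases hu : t = G.verts
  · exact Or.inr (Or.inl (hu ▸ hT.tildeT_subset_verts hs))
  obtain ⟨m, hm, htm⟩ := exists_maxtP_superset ht hu
  by_cases hl : Linked G m s
  · exact Or.inl (htm.trans (subset_tildeT_of_linked hm hl))
  · exact Or.inr (Or.inr ((hT.farApart_tildeT_of_not_linked hs hm hl).mono_left htm))

lemma IsTubing.substT (hT : IsTubing G T) {S : Finset (Finset ℕ)}
    (hS : IsTubing (gammaStar G T) S) : IsTubing G (substT G T S) := by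
  have hsub : ∀ s ∈ S, s ⊆ (gammaStar G T).verts := fun s hs => (hS.2.1 s hs).2.1
  refine isTubing_union hT ?_ ?_ ?_ <;> simp only [Finset.mem_image]
  · rintro _ ⟨s, hs, rfl⟩
    exact hT.isTube_tildeT (hS.2.1 s hs)
  · rintro _ ⟨s, hs, rfl⟩ _ ⟨s', hs', rfl⟩ hne
    rcases hS.2.2 s hs s' hs' (fun h => hne (h ▸ rfl)) with h | h | h
    · exact Or.inl (tildeT_mono h (hsub s' hs'))
    · exact Or.inr (Or.inl (tildeT_mono h (hsub s hs)))
    · exact Or.inr (Or.inr (hT.farApart_tildeT (hsub s hs) (hsub s' hs') h))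
  · rintro t ht _ ⟨s, hs, rfl⟩ -
    exact hT.compatible_tildeT ht (hsub s hs)

end CDTub

open CDTub in
theorem substitution_is_tubing_general (G : FinGraph)
    (T : Finset (Finset ℕ)) (hT : IsTubing G T) :
    (∀ S : Finset (Finset ℕ), IsTubing (gammaStar G T) S →
      IsTubing G (substT G T S) ∧ T ⊆ substT G T S) ∧
    (∀ t ∈ T, ∀ S : Finset (Finset ℕ),
      IsTubing (gammaStar (induce G t) (restrictT T t)) S →
        IsTubing G (gammaSub G T t S) ∧ T ⊆ gammaSub G T t S) :=
  ⟨fun _ hS => ⟨hT.substT hS, Finset.subset_union_left⟩,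
    fun _ ht _ hS => ⟨hT.union_of_induce ht ((hT.restrict ht).substT hS) Finset.subset_union_left,
      Finset.subset_union_left⟩⟩

open CDTub in
/-- Substitution produces tubings: for a tubing `S` of `Γ_T^*`, `T •_Γ S` is a tubing of
`Γ` containing `T`; more generally, for `t ∈ T` and a tubing `S` of `(Γ_t)_{T|_t}^*`,
the `t`-substitution `γ_t(T;S)` is a tubing of `Γ` containing `T`. -/
theorem substitution_is_tubing (G : FinGraph) (hc : IsConnGraph G)
    (T : Finset (Finset ℕ)) (hT : IsTubing G T) :
    (∀ S : Finset (Finset ℕ), IsTubing (gammaStar G T) S →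
      IsTubing G (substT G T S) ∧ T ⊆ substT G T S) ∧
    (∀ t ∈ T, ∀ S : Finset (Finset ℕ),
      IsTubing (gammaStar (induce G t) (restrictT T t)) S →
        IsTubing G (gammaSub G T t S) ∧ T ⊆ gammaSub G T t S) :=
  substitution_is_tubing_general G T hT
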